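/- For every n ∈ ℕ, the product L_n · L^{-1} equals the (n+1)×(n+1) identity matrix, where L_n is the weight matrix of the L-type network of order n and L^{-1} is the weight matrix of the same network under the inverse weighting. -/

import Mathlib

/-- The heights of an `L^m_n`-path of order `n` (the abscissas `x i = m + i` are
determined, so only the heights `y i ∈ {0, …, n}`, encoded as `Fin (n+1)`, are recorded):
`y (k+1) ∈ {y k, y k - 1}` and a fall step at position `k` forces `y k ≥ n - k`. -/
def IsLPath (n : ℕ) (y : Fin (n + 1) → Fin (n + 1)) : Prop :=
  ∀ k : Fin n,
    ((y k.succ = y k.castSucc ∨ (y k.succ : ℕ) + 1 = (y k.castSucc : ℕ)) ∧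
      ((y k.succ : ℕ) + 1 = (y k.castSucc : ℕ) → n - (k : ℕ) ≤ (y k.castSucc : ℕ)))

/-- The weight of an `L`-type path: a fall step from `(k, j)` to `(k+1, j-1)` has weight
`t j (k + j - n)` and a horizontal step has weight `1`; the weight of the path is the
product of the weights of its steps. -/
def lweight {R : Type*} [CommRing R] (n : ℕ) (t : ℕ → ℕ → R)
    (y : Fin (n + 1) → Fin (n + 1)) : R :=
  ∏ k : Fin n,
    if (y k.succ : ℕ) + 1 = (y k.castSucc : ℕ)
    then t (y k.castSucc : ℕ) ((k : ℕ) + (y k.castSucc : ℕ) - n) else 1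

open scoped Classical in
/-- The matrix `L n`: its `(i, j)` entry is the sum of the weights of all `L^0_n`-paths
with `y 0 = i` and `y n = j`. -/
noncomputable def Lmat {R : Type*} [CommRing R] (n : ℕ) (t : ℕ → ℕ → R) :
    Matrix (Fin (n + 1)) (Fin (n + 1)) R :=
  Matrix.of fun i j =>
    ∑ y ∈ Finset.univ.filter
        (fun y : Fin (n + 1) → Fin (n + 1) => IsLPath n y ∧ y 0 = i ∧ y (Fin.last n) = j),
      lweight n t y

/-- The inverse weighting of an `L`-type path: a fall step from `(k, j)` to
`(k+1, j-1)` has weight `-t j (n - k - 1)` and a horizontal step has weight `1`; the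
weight of the path is the product of the weights of its steps. -/
def linvweight {R : Type*} [CommRing R] (n : ℕ) (t : ℕ → ℕ → R)
    (y : Fin (n + 1) → Fin (n + 1)) : R :=
  ∏ k : Fin n,
    if (y k.succ : ℕ) + 1 = (y k.castSucc : ℕ)
    then -t (y k.castSucc : ℕ) (n - (k : ℕ) - 1) else 1

open scoped Classical in
/-- The matrix `L⁻¹`: its `(i, j)` entry is the sum of the inverse weights of all
`L^0_n`-paths with `y 0 = i` and `y n = j`. -/
noncomputable def LinvMat {R : Type*} [CommRing R] (n : ℕ) (t : ℕ → ℕ → R) :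
    Matrix (Fin (n + 1)) (Fin (n + 1)) R :=
  Matrix.of fun i j =>
    ∑ y ∈ Finset.univ.filter
        (fun y : Fin (n + 1) → Fin (n + 1) => IsLPath n y ∧ y 0 = i ∧ y (Fin.last n) = j),
      linvweight n t y

/-!
Entry `(i, j)` of `Lmat n t * LinvMat n t` is the sum of `lweight p * linvweight q` over pairs of
`L`-paths `p` from `i` to some `m` and `q` from `m` to `j`. A fall at step `a` from height `ℓ`
contributes `t ℓ (a + ℓ - n)` to `lweight`, a fall at step `b` from height `ℓ` contributes
`-t ℓ (n - b - 1)` to `linvweight`, and these factors are opposite when `a + b + ℓ = 2n - 1`.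
Compare the second index of `t` at the last fall of `p` with the one at the first fall of `q`: if the
former is larger, move that fall of `p` into `q` at the step carrying the same factor, otherwise move
the first fall of `q` into `p`. This is a sign-reversing involution on the pairs, without fixed
points unless `i = j`, in which case the only pair is the constant one, of weight `1`.
-/

namespace LPath

variable {n : ℕ}

def height (y : Fin (n + 1) → Fin (n + 1)) (s : ℕ) : ℕ := y (Fin.clamp s n)

lemma height_of_le (y : Fin (n + 1) → Fin (n + 1)) {s : ℕ} (hs : s ≤ n) :
    height y s = y ⟨s, Nat.lt_succ_of_le hs⟩ := by
  simp [height, Fin.clamp, Nat.min_eq_left hs]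

lemma height_val (y : Fin (n + 1) → Fin (n + 1)) (s : Fin (n + 1)) :
    height y s = y s :=
  height_of_le y (Nat.le_of_lt_succ s.isLt)

lemma height_zero (y : Fin (n + 1) → Fin (n + 1)) : height y 0 = y 0 :=
  height_val y 0

lemma height_last (y : Fin (n + 1) → Fin (n + 1)) : height y n = y (Fin.last n) :=
  height_val y (Fin.last n)

lemma height_le (y : Fin (n + 1) → Fin (n + 1)) (s : ℕ) : height y s ≤ n :=
  Nat.le_of_lt_succ (y _).isLt

lemma height_of_ge (y : Fin (n + 1) → Fin (n + 1)) {s : ℕ} (hs : n ≤ s) :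
    height y s = height y n := by
  simp [height, Fin.clamp, Nat.min_eq_right hs]

lemma ext_height {y y' : Fin (n + 1) → Fin (n + 1)}
    (h : ∀ s ≤ n, height y s = height y' s) : y = y' := by
  funext s
  apply Fin.ext
  rw [← height_val, ← height_val, h s (Nat.le_of_lt_succ s.isLt)]

def ValidStep (n k a b : ℕ) : Prop := (b = a ∨ b + 1 = a) ∧ (b + 1 = a → n - k ≤ a)

lemma isLPath_iff (y : Fin (n + 1) → Fin (n + 1)) :
    IsLPath n y ↔ ∀ k < n, ValidStep n k (height y k) (height y (k + 1)) := by
  have hstep : ∀ k : Fin n, height y k = y k.castSucc ∧ height y (k + 1) = y k.succ :=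
    fun k => ⟨height_val y k.castSucc, height_val y k.succ⟩
  refine ⟨fun h k hk => ?_, fun h k => ?_⟩
  · obtain ⟨h₀, h₁⟩ := hstep ⟨k, hk⟩
    simpa only [ValidStep, h₀, h₁, Fin.ext_iff] using h ⟨k, hk⟩
  · obtain ⟨h₀, h₁⟩ := hstep k
    simpa only [ValidStep, h₀, h₁, Fin.ext_iff] using h k k.isLt

def IsFall (y : Fin (n + 1) → Fin (n + 1)) (k : ℕ) : Prop := height y (k + 1) + 1 = height y k

instance (y : Fin (n + 1) → Fin (n + 1)) : DecidablePred (IsFall y) :=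
  fun _ => inferInstanceAs (Decidable (_ = _))

def HasFall (y : Fin (n + 1) → Fin (n + 1)) : Prop := ∃ k, IsFall y k

lemma IsFall.lt {y : Fin (n + 1) → Fin (n + 1)} {k : ℕ} (h : IsFall y k) : k < n := by
  by_contra! hk
  unfold IsFall at h
  rw [height_of_ge y hk, height_of_ge y (by omega)] at h
  omega

def lastFall (y : Fin (n + 1) → Fin (n + 1)) : ℕ := Nat.findGreatest (IsFall y) n

noncomputable def firstFall (y : Fin (n + 1) → Fin (n + 1)) : ℕ := sInf {k | IsFall y k}

section fall

variable {y : Fin (n + 1) → Fin (n + 1)}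

lemma isFall_lastFall (h : HasFall y) : IsFall y (lastFall y) := by
  obtain ⟨k, hk⟩ := h
  exact Nat.findGreatest_spec hk.lt.le hk

lemma not_isFall_of_lastFall_lt {k : ℕ} (hk : lastFall y < k) : ¬IsFall y k :=
  fun h => Nat.findGreatest_is_greatest hk h.lt.le h

lemma lastFall_eq {a : ℕ} (ha : IsFall y a) (h : ∀ k, a < k → ¬IsFall y k) :
    lastFall y = a :=
  Nat.findGreatest_eq_iff.2 ⟨ha.lt.le, fun _ => ha, fun k hk _ => h k hk⟩

lemma isFall_firstFall (h : HasFall y) : IsFall y (firstFall y) :=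
  Nat.sInf_mem (s := {k | IsFall y k}) h

lemma not_isFall_of_lt_firstFall {k : ℕ} (hk : k < firstFall y) : ¬IsFall y k :=
  Nat.notMem_of_lt_sInf (s := {k | IsFall y k}) hk

lemma firstFall_eq {b : ℕ} (hb : IsFall y b) (h : ∀ k < b, ¬IsFall y k) : firstFall y = b :=
  le_antisymm (Nat.sInf_le (s := {k | IsFall y k}) hb)
    (not_lt.1 fun hlt => h _ hlt (isFall_firstFall ⟨b, hb⟩))

end fall

end LPath

namespace IsLPath

open LPath

variable {n : ℕ} {y : Fin (n + 1) → Fin (n + 1)}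

lemma le_add_height_of_isFall (hy : IsLPath n y) {k : ℕ} (h : IsFall y k) :
    n ≤ k + height y k := by
  have := ((isLPath_iff y).1 hy k h.lt).2 h
  omega

lemma height_succ (hy : IsLPath n y) {k : ℕ} (h : ¬IsFall y k) :
    height y (k + 1) = height y k := by
  rcases Nat.lt_or_ge k n with hk | hk
  · exact ((isLPath_iff y).1 hy k hk).1.resolve_right h
  · rw [height_of_ge y hk, height_of_ge y (by omega)]

lemma height_antitone (hy : IsLPath n y) : Antitone (height y) := by
  refine antitone_nat_of_succ_le fun k => ?_
  by_cases h : IsFall y k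
  · exact h ▸ Nat.le_succ _
  · exact (hy.height_succ h).le

lemma height_eq_of_forall_not_isFall (hy : IsLPath n y) {s u : ℕ} (hsu : s ≤ u)
    (h : ∀ k, s ≤ k → k < u → ¬IsFall y k) :
    height y u = height y s := by
  induction u, hsu using Nat.le_induction with
  | base => rfl
  | succ u hsu ih =>
    rw [hy.height_succ (h u hsu u.lt_succ_self), ih fun k hk hku => h k hk (by omega)]

lemma height_eq_of_not_hasFall (hy : IsLPath n y) (h : ¬HasFall y) (s : ℕ) :
    height y s = height y 0 :=
  hy.height_eq_of_forall_not_isFall s.zero_le fun k _ _ hk => h ⟨k, hk⟩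

lemma height_eq_of_lastFall_lt (hy : IsLPath n y) {s : ℕ} (hs : lastFall y < s) :
    height y s = height y (lastFall y + 1) :=
  hy.height_eq_of_forall_not_isFall hs fun _ hk _ => not_isFall_of_lastFall_lt (by omega)

lemma height_eq_of_le_firstFall (hy : IsLPath n y) {s : ℕ} (hs : s ≤ firstFall y) :
    height y s = height y 0 :=
  hy.height_eq_of_forall_not_isFall s.zero_le fun _ _ hk => not_isFall_of_lt_firstFall (by omega)

end IsLPath

namespace LPath

open Finset

variable {n : ℕ}

section weight

variable {R : Type*} [CommRing R]

def stepProd (f : ℕ → ℕ → ℕ → R) (y : Fin (n + 1) → Fin (n + 1)) : R :=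
  ∏ k ∈ range n, f k (height y k) (height y (k + 1))

lemma stepProd_eq_prod_fin (f : ℕ → ℕ → ℕ → R) (y : Fin (n + 1) → Fin (n + 1)) :
    stepProd f y = ∏ k : Fin n, f k (y k.castSucc) (y k.succ) := by
  rw [stepProd, ← Fin.prod_univ_eq_prod_range]
  exact prod_congr rfl fun k _ => by rw [← height_val, ← height_val]; rfl

lemma lweight_eq_stepProd (t : ℕ → ℕ → R) (y : Fin (n + 1) → Fin (n + 1)) :
    lweight n t y = stepProd (fun k a b => if b + 1 = a then t a (k + a - n) else 1) y := by
  rw [stepProd_eq_prod_fin, lweight]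

lemma linvweight_eq_stepProd (t : ℕ → ℕ → R) (y : Fin (n + 1) → Fin (n + 1)) :
    linvweight n t y =
      stepProd (fun k a b => if b + 1 = a then -t a (n - k - 1) else 1) y := by
  rw [stepProd_eq_prod_fin, linvweight]

lemma stepProd_mul_eq_of_forall_ne (f : ℕ → ℕ → ℕ → R)
    {y y' : Fin (n + 1) → Fin (n + 1)} {a : ℕ} (ha : a < n)
    (h : ∀ k < n, k ≠ a →
      f k (height y k) (height y (k + 1)) = f k (height y' k) (height y' (k + 1))) :
    stepProd f y * f a (height y' a) (height y' (a + 1)) =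
      stepProd f y' * f a (height y a) (height y (a + 1)) := by
  have ha' : a ∈ range n := mem_range.2 ha
  rw [stepProd, stepProd, ← mul_prod_erase _ _ ha', ← mul_prod_erase _ _ ha',
    prod_congr rfl fun k hk => h k (mem_range.1 (mem_of_mem_erase hk)) (ne_of_mem_erase hk)]
  ring

end weight

def splice (a b : ℕ) (c : Fin (n + 1)) (p q : Fin (n + 1) → Fin (n + 1)) :
    (Fin (n + 1) → Fin (n + 1)) × (Fin (n + 1) → Fin (n + 1)) :=
  (fun s => if (s : ℕ) ≤ a then p s else c, fun s => if (s : ℕ) ≤ b then c else q s)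

section splice

variable {a b s : ℕ} {c : Fin (n + 1)} {p q : Fin (n + 1) → Fin (n + 1)}

lemma height_splice_fst (hs : s ≤ n) :
    height (splice a b c p q).1 s = if s ≤ a then height p s else (c : ℕ) := by
  simp only [splice, height_of_le _ hs]
  split_ifs <;> rfl

lemma height_splice_snd (hs : s ≤ n) :
    height (splice a b c p q).2 s = if s ≤ b then (c : ℕ) else height q s := by
  simp only [splice, height_of_le _ hs]
  split_ifs <;> rfl

end splice

def IsLPair (i j : Fin (n + 1)) (p q : Fin (n + 1) → Fin (n + 1)) : Prop :=
  IsLPath n p ∧ IsLPath n q ∧ p 0 = i ∧ p (Fin.last n) = q 0 ∧ q (Fin.last n) = j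

/-- The second index of `t` in the weight of the last fall of `p`, which on an `L`-path
starts at height `height p n + 1`. -/
def lastFallIndex (p : Fin (n + 1) → Fin (n + 1)) : ℕ := lastFall p + (height p n + 1) - n

/-- The second index of `t` in the inverse weight of the first fall of `q`. -/
noncomputable def firstFallIndex (q : Fin (n + 1) → Fin (n + 1)) : ℕ := n - 1 - firstFall q

def MovesFallRight (p q : Fin (n + 1) → Fin (n + 1)) : Prop :=
  HasFall p ∧ (HasFall q → firstFallIndex q < lastFallIndex p)

-- Each move keeps the second index of `t` of the moved fall, which fixes its new abscissa.
def moveFallRight (p q : Fin (n + 1) → Fin (n + 1)) :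
    (Fin (n + 1) → Fin (n + 1)) × (Fin (n + 1) → Fin (n + 1)) :=
  splice (lastFall p) (n - 1 - lastFallIndex p) (p (Fin.clamp (lastFall p) n)) p q

noncomputable def moveFallLeft (p q : Fin (n + 1) → Fin (n + 1)) :
    (Fin (n + 1) → Fin (n + 1)) × (Fin (n + 1) → Fin (n + 1)) :=
  splice (firstFallIndex q + n - height q 0) (firstFall q) (q (Fin.clamp (firstFall q + 1) n)) p q

open Classical in
noncomputable def toggleFall (x : (Fin (n + 1) → Fin (n + 1)) × (Fin (n + 1) → Fin (n + 1))) :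
    (Fin (n + 1) → Fin (n + 1)) × (Fin (n + 1) → Fin (n + 1)) :=
  if MovesFallRight x.1 x.2 then moveFallRight x.1 x.2 else moveFallLeft x.1 x.2

/-- `(P, Q)` arises from `(p, q)` by moving the fall from height `ℓ` to `ℓ - 1` from
abscissa `a` of `p` (its last fall) to abscissa `b` of `q` (its first fall).
The relation `a + b + ℓ = 2n - 1` says that the second index of `t` is the same in the weight
`t ℓ (a + ℓ - n)` of the old fall and in the inverse weight `-t ℓ (n - b - 1)` of the new one.
Primed fields describe `P` and `Q`. -/
structure IsFallTransfer (a b ℓ : ℕ) (p q P Q : Fin (n + 1) → Fin (n + 1)) : Prop where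
  a_lt : a < n
  b_lt : b < n
  add_eq : a + b + ℓ = 2 * n - 1
  fst_head : ∀ s ≤ a, height P s = height p s
  fst_at : height p a = ℓ
  fst_tail : ∀ s, a < s → s ≤ n → height p s = ℓ - 1
  fst_tail' : ∀ s, a ≤ s → s ≤ n → height P s = ℓ
  snd_tail : ∀ s, b < s → s ≤ n → height Q s = height q s
  snd_head : ∀ s ≤ b + 1, height q s = ℓ - 1
  snd_head' : ∀ s ≤ b, height Q s = ℓ

namespace IsFallTransfer

variable {a b ℓ : ℕ} {p q P Q : Fin (n + 1) → Fin (n + 1)}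
  (h : IsFallTransfer a b ℓ p q P Q)
include h

lemma one_le : 1 ≤ ℓ := by have := h.a_lt; have := h.b_lt; have := h.add_eq; omega

lemma isFall_fst : IsFall p a := by
  unfold IsFall
  rw [h.fst_tail (a + 1) (by omega) h.a_lt, h.fst_at]
  have := h.one_le
  omega

lemma lastFall_fst : lastFall p = a :=
  lastFall_eq h.isFall_fst fun k hk hf => by
    have := hf.lt
    unfold IsFall at hf
    rw [h.fst_tail k hk (by omega), h.fst_tail (k + 1) (by omega) (by omega)] at hf
    omega

lemma lastFall_fst'_lt (hP : HasFall P) : lastFall P < a := by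
  have hf := isFall_lastFall hP
  by_contra! hle
  have := hf.lt
  unfold IsFall at hf
  rw [h.fst_tail' _ hle (by omega), h.fst_tail' _ (by omega) (by omega)] at hf
  omega

lemma isFall_snd' : IsFall Q b := by
  unfold IsFall
  rw [h.snd_tail (b + 1) (by omega) h.b_lt, h.snd_head (b + 1) le_rfl, h.snd_head' b le_rfl]
  have := h.one_le
  omega

lemma firstFall_snd' : firstFall Q = b :=
  firstFall_eq h.isFall_snd' fun k hk hf => by
    unfold IsFall at hf
    rw [h.snd_head' k hk.le, h.snd_head' (k + 1) hk] at hf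
    omega

lemma lt_firstFall_snd (hq : HasFall q) : b < firstFall q := by
  have hf := isFall_firstFall hq
  by_contra! hle
  unfold IsFall at hf
  rw [h.snd_head _ (by omega), h.snd_head _ (by omega)] at hf
  omega

lemma movesFallRight : MovesFallRight p q := by
  refine ⟨⟨a, h.isFall_fst⟩, fun hq => ?_⟩
  have := h.lt_firstFall_snd hq
  have := (isFall_firstFall hq).lt
  have := h.fst_tail n h.a_lt le_rfl
  have := h.add_eq
  rw [firstFallIndex, lastFallIndex, h.lastFall_fst]
  omega

lemma not_movesFallRight : ¬MovesFallRight P Q := fun ⟨hP, hlt⟩ => by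
  have hidx := hlt ⟨b, h.isFall_snd'⟩
  rw [firstFallIndex, lastFallIndex, h.firstFall_snd', h.fst_tail' n h.a_lt.le le_rfl] at hidx
  have := h.lastFall_fst'_lt hP
  have := h.add_eq
  omega

lemma moveFallRight_eq : moveFallRight p q = (P, Q) := by
  have hb : n - 1 - lastFallIndex p = b := by
    have := h.fst_tail n h.a_lt le_rfl
    have := h.add_eq
    have := h.one_le
    have := h.b_lt
    rw [lastFallIndex, h.lastFall_fst]
    omega
  have hc : (p (Fin.clamp a n) : ℕ) = ℓ := h.fst_at
  unfold moveFallRight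
  rw [hb, h.lastFall_fst]
  refine Prod.ext (ext_height fun s hs => ?_) (ext_height fun s hs => ?_)
  · rw [height_splice_fst hs]
    split_ifs with hsa
    · exact (h.fst_head s hsa).symm
    · rw [hc, h.fst_tail' s (by omega) hs]
  · rw [height_splice_snd hs]
    split_ifs with hsb
    · rw [hc, h.snd_head' s hsb]
    · exact (h.snd_tail s (by omega) hs).symm

lemma moveFallLeft_eq : moveFallLeft P Q = (p, q) := by
  have ha : firstFallIndex Q + n - height Q 0 = a := by
    have := h.snd_head' 0 b.zero_le
    have := h.add_eq
    have := h.b_lt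
    rw [firstFallIndex, h.firstFall_snd']
    omega
  have hc : (Q (Fin.clamp (b + 1) n) : ℕ) = ℓ - 1 :=
    (h.snd_tail (b + 1) (by omega) h.b_lt).trans (h.snd_head (b + 1) le_rfl)
  unfold moveFallLeft
  rw [ha, h.firstFall_snd']
  refine Prod.ext (ext_height fun s hs => ?_) (ext_height fun s hs => ?_)
  · rw [height_splice_fst hs]
    split_ifs with hsa
    · exact h.fst_head s hsa
    · rw [hc, h.fst_tail s (by omega) hs]
  · rw [height_splice_snd hs]
    split_ifs with hsb
    · rw [hc, h.snd_head s (by omega)]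
    · exact h.snd_tail s (by omega) hs

lemma toggleFall_eq : toggleFall (p, q) = (P, Q) ∧ toggleFall (P, Q) = (p, q) :=
  ⟨by simp only [toggleFall, if_pos h.movesFallRight, h.moveFallRight_eq],
    by simp only [toggleFall, if_neg h.not_movesFallRight, h.moveFallLeft_eq]⟩

lemma lweight_fst {R : Type*} [CommRing R] (t : ℕ → ℕ → R) :
    lweight n t p = lweight n t P * t ℓ (a + ℓ - n) := by
  have := h.one_le
  have := h.a_lt
  have key := stepProd_mul_eq_of_forall_ne
    (fun k a b => if b + 1 = a then t a (k + a - n) else 1) (y := p) (y' := P) h.a_lt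
    fun k hk hka => by
      rcases Nat.lt_or_gt_of_ne hka with hlt | hgt
      · rw [h.fst_head k hlt.le, h.fst_head (k + 1) hlt]
      · rw [h.fst_tail k hgt hk.le, h.fst_tail (k + 1) (by omega) hk,
          h.fst_tail' k hgt.le hk.le, h.fst_tail' (k + 1) (by omega) hk,
          if_neg (by omega), if_neg (by omega)]
  rw [h.fst_tail' a le_rfl h.a_lt.le, h.fst_tail' (a + 1) (by omega) h.a_lt, h.fst_at,
    h.fst_tail (a + 1) (by omega) h.a_lt, if_neg (by omega), if_pos (by omega), mul_one] at key
  rw [lweight_eq_stepProd, lweight_eq_stepProd, key]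

lemma linvweight_snd' {R : Type*} [CommRing R] (t : ℕ → ℕ → R) :
    linvweight n t Q = linvweight n t q * -t ℓ (n - b - 1) := by
  have := h.one_le
  have := h.b_lt
  have key := stepProd_mul_eq_of_forall_ne
    (fun k a b => if b + 1 = a then -t a (n - k - 1) else 1) (y := Q) (y' := q) h.b_lt
    fun k hk hkb => by
      rcases Nat.lt_or_gt_of_ne hkb with hlt | hgt
      · rw [h.snd_head k (by omega), h.snd_head (k + 1) (by omega),
          h.snd_head' k hlt.le, h.snd_head' (k + 1) hlt, if_neg (by omega), if_neg (by omega)]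
      · rw [h.snd_tail k hgt hk.le, h.snd_tail (k + 1) (by omega) hk]
  rw [h.snd_head b (by omega), h.snd_head (b + 1) le_rfl, h.snd_head' b le_rfl,
    h.snd_tail (b + 1) (by omega) h.b_lt, h.snd_head (b + 1) le_rfl, if_neg (by omega),
    if_pos (by omega), mul_one] at key
  rw [linvweight_eq_stepProd, linvweight_eq_stepProd, key]

lemma weight_add_eq_zero {R : Type*} [CommRing R] (t : ℕ → ℕ → R) :
    lweight n t p * linvweight n t q + lweight n t P * linvweight n t Q = 0 := by
  have := h.a_lt
  have := h.b_lt
  have := h.add_eq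
  rw [h.lweight_fst, h.linvweight_snd', show n - b - 1 = a + ℓ - n by omega]
  ring

lemma isLPath_fst_iff : IsLPath n p ↔ IsLPath n P := by
  rw [isLPath_iff, isLPath_iff]
  refine forall₂_congr fun k hk => ?_
  have := h.b_lt
  have := h.add_eq
  rcases Nat.lt_trichotomy k a with hka | rfl | hka
  · rw [h.fst_head k hka.le, h.fst_head (k + 1) hka]
  · rw [h.fst_at, h.fst_tail (k + 1) (by omega) hk, h.fst_tail' k le_rfl hk.le,
      h.fst_tail' (k + 1) (by omega) hk]
    unfold ValidStep
    omega
  · rw [h.fst_tail k hka hk.le, h.fst_tail (k + 1) (by omega) hk,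
      h.fst_tail' k hka.le hk.le, h.fst_tail' (k + 1) (by omega) hk]
    unfold ValidStep
    omega

lemma isLPath_snd_iff : IsLPath n q ↔ IsLPath n Q := by
  rw [isLPath_iff, isLPath_iff]
  refine forall₂_congr fun k hk => ?_
  have := h.a_lt
  have := h.add_eq
  rcases Nat.lt_trichotomy k b with hkb | rfl | hkb
  · rw [h.snd_head k (by omega), h.snd_head (k + 1) (by omega), h.snd_head' k hkb.le,
      h.snd_head' (k + 1) hkb]
    unfold ValidStep
    omega
  · rw [h.snd_head k (by omega), h.snd_head (k + 1) le_rfl, h.snd_head' k le_rfl,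
      h.snd_tail (k + 1) (by omega) hk, h.snd_head (k + 1) le_rfl]
    unfold ValidStep
    omega
  · rw [h.snd_tail k hkb hk.le, h.snd_tail (k + 1) (by omega) hk]

lemma isLPair_iff (i j : Fin (n + 1)) : IsLPair i j p q ↔ IsLPair i j P Q := by
  have := h.a_lt
  have := h.b_lt
  have h₀ : P 0 = p 0 := Fin.ext (by
    rw [← height_zero, ← height_zero, h.fst_head 0 a.zero_le])
  have h₁ : p (Fin.last n) = q 0 := Fin.ext (by
    rw [← height_zero, ← height_last, h.fst_tail n h.a_lt le_rfl, h.snd_head 0 b.succ.zero_le])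
  have h₂ : P (Fin.last n) = Q 0 := Fin.ext (by
    rw [← height_zero, ← height_last, h.fst_tail' n h.a_lt.le le_rfl, h.snd_head' 0 b.zero_le])
  have h₃ : Q (Fin.last n) = q (Fin.last n) := Fin.ext (by
    rw [← height_last, ← height_last, h.snd_tail n h.b_lt le_rfl])
  simp only [IsLPair, h.isLPath_fst_iff, h.isLPath_snd_iff, h₀, h₁, h₂, h₃, true_and]

lemma fst_ne : p ≠ P := fun hpP => by
  have h₁ := h.fst_tail n h.a_lt le_rfl
  rw [hpP, h.fst_tail' n h.a_lt.le le_rfl] at h₁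
  have := h.one_le
  omega

end IsFallTransfer

lemma isFallTransfer_moveFallRight {p q : Fin (n + 1) → Fin (n + 1)} (hp : IsLPath n p)
    (hq : IsLPath n q) (hpq : height p n = height q 0) (hM : MovesFallRight p q) :
    IsFallTransfer (lastFall p) (n - 1 - lastFallIndex p) (height p n + 1) p q
      (moveFallRight p q).1 (moveFallRight p q).2 := by
  have hidx : lastFallIndex p = lastFall p + (height p n + 1) - n := rfl
  have hfall := isFall_lastFall hM.1
  have ha := hfall.lt
  have hbound := hp.le_add_height_of_isFall hfall
  have htail : ∀ s, lastFall p < s → height p s = height p n := fun s hs =>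
    (hp.height_eq_of_lastFall_lt hs).trans (hp.height_eq_of_lastFall_lt ha).symm
  have hat : height p (lastFall p) = height p n + 1 := by
    rw [← htail _ (lastFall p).lt_succ_self]
    exact hfall.symm
  have hle := height_le p (lastFall p)
  have hc : (p (Fin.clamp (lastFall p) n) : ℕ) = height p n + 1 := hat
  have hqhead : ∀ s ≤ n - 1 - lastFallIndex p + 1, height q s = height q 0 := by
    intro s hs
    by_cases hfq : HasFall q
    · have := hM.2 hfq
      have := (isFall_firstFall hfq).lt
      exact hq.height_eq_of_le_firstFall (by unfold firstFallIndex at *; omega)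
    · exact hq.height_eq_of_not_hasFall hfq s
  refine ⟨ha, by omega, by omega, fun s hs => ?_, hat, fun s hs _ => ?_, fun s hs hsn => ?_,
    fun s hs hsn => ?_, fun s hs => ?_, fun s hs => ?_⟩
  · rw [moveFallRight, height_splice_fst (by omega), if_pos hs]
  · rw [htail s hs, Nat.add_sub_cancel]
  · rw [moveFallRight, height_splice_fst hsn]
    split_ifs with hsa
    · rw [show s = lastFall p by omega, hat]
    · exact hc
  · rw [moveFallRight, height_splice_snd hsn, if_neg (by omega)]
  · rw [hqhead s hs, ← hpq, Nat.add_sub_cancel]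
  · rw [moveFallRight, height_splice_snd (by omega), if_pos hs]
    exact hc

lemma isFallTransfer_moveFallLeft {P Q : Fin (n + 1) → Fin (n + 1)} (hP : IsLPath n P)
    (hQ : IsLPath n Q) (hPQ : height P n = height Q 0) (hM : ¬MovesFallRight P Q)
    (hf : HasFall Q) :
    IsFallTransfer (firstFallIndex Q + n - height Q 0) (firstFall Q) (height Q 0)
      (moveFallLeft P Q).1 (moveFallLeft P Q).2 P Q := by
  have hidx : firstFallIndex Q = n - 1 - firstFall Q := rfl
  have hfall := isFall_firstFall hf
  have hb := hfall.lt
  have hhead : ∀ s ≤ firstFall Q, height Q s = height Q 0 := fun s hs =>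
    hQ.height_eq_of_le_firstFall hs
  have hbound := hQ.le_add_height_of_isFall hfall
  rw [hhead _ le_rfl] at hbound
  have hnext : height Q (firstFall Q + 1) + 1 = height Q 0 := hhead _ le_rfl ▸ hfall
  have hle := height_le Q 0
  have hc : (Q (Fin.clamp (firstFall Q + 1) n) : ℕ) = height Q 0 - 1 := by
    change height Q (firstFall Q + 1) = _
    omega
  have hPtail : ∀ s, firstFallIndex Q + n - height Q 0 ≤ s → height P s = height Q 0 := by
    intro s hs
    rw [← hPQ]
    by_cases hfP : HasFall P
    · have hlt : lastFall P < firstFallIndex Q + n - height Q 0 := by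
        have := not_lt.1 fun h => hM ⟨hfP, fun _ => h⟩
        unfold lastFallIndex at this
        omega
      exact (hP.height_eq_of_lastFall_lt (by omega)).trans
        (hP.height_eq_of_lastFall_lt (by omega)).symm
    · exact (hP.height_eq_of_not_hasFall hfP s).trans (hP.height_eq_of_not_hasFall hfP n).symm
  refine ⟨by omega, hb, by omega, fun s hs => ?_, ?_, fun s hs hsn => ?_,
    fun s hs _ => hPtail s hs, fun s hs hsn => ?_, fun s hs => ?_, hhead⟩
  · rw [moveFallLeft, height_splice_fst (by omega), if_pos hs]
  · rw [moveFallLeft, height_splice_fst (by omega), if_pos le_rfl, hPtail _ le_rfl]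
  · rw [moveFallLeft, height_splice_fst hsn, if_neg (by omega), hc]
  · rw [moveFallLeft, height_splice_snd hsn, if_neg (by omega)]
  · rw [moveFallLeft, height_splice_snd (by omega)]
    split_ifs with hsb
    · exact hc
    · rw [show s = firstFall Q + 1 by omega]
      omega

lemma isLPair_self_iff {i : Fin (n + 1)} {p q : Fin (n + 1) → Fin (n + 1)} :
    IsLPair i i p q ↔ p = (fun _ => i) ∧ q = (fun _ => i) := by
  constructor
  · rintro ⟨hp, hq, hp0, hpq, hqn⟩
    have hp0' : height p 0 = i := by rw [height_zero, hp0]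
    have hpq' : height p n = height q 0 := by rw [height_last, height_zero, hpq]
    have hqn' : height q n = i := by rw [height_last, hqn]
    have hpn := hp.height_antitone n.zero_le
    have hqn := hq.height_antitone n.zero_le
    refine ⟨ext_height fun s hs => ?_, ext_height fun s hs => ?_⟩
    · have := hp.height_antitone s.zero_le
      have := hp.height_antitone hs
      change _ = (i : ℕ)
      omega
    · have := hq.height_antitone s.zero_le
      have := hq.height_antitone hs
      change _ = (i : ℕ)
      omega
  · rintro ⟨rfl, rfl⟩
    have hconst : IsLPath n (fun _ => i) := (isLPath_iff _).2 fun k _ => by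
      change ValidStep n k i i
      unfold ValidStep
      omega
    exact ⟨hconst, hconst, rfl, rfl, rfl⟩

lemma IsLPair.hasFall {i j : Fin (n + 1)} {p q : Fin (n + 1) → Fin (n + 1)} (hij : i ≠ j)
    (h : IsLPair i j p q) : HasFall p ∨ HasFall q := by
  obtain ⟨hp, hq, hp0, hpq, hqn⟩ := h
  by_contra! hnf
  apply hij
  rw [← hp0, ← hqn, Fin.ext_iff, ← height_zero, ← height_last,
    hq.height_eq_of_not_hasFall hnf.2, ← hp.height_eq_of_not_hasFall hnf.1 n, height_last,
    height_zero, hpq]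

lemma exists_isFallTransfer_toggleFall {i j : Fin (n + 1)} {p q : Fin (n + 1) → Fin (n + 1)}
    (hij : i ≠ j) (h : IsLPair i j p q) :
    (∃ a b ℓ, IsFallTransfer a b ℓ p q (toggleFall (p, q)).1 (toggleFall (p, q)).2) ∨
      ∃ a b ℓ, IsFallTransfer a b ℓ (toggleFall (p, q)).1 (toggleFall (p, q)).2 p q := by
  have hfall := h.hasFall hij
  obtain ⟨hp, hq, -, hpq, -⟩ := h
  have hpq' : height p n = height q 0 := by rw [height_last, height_zero, hpq]
  by_cases hM : MovesFallRight p q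
  · simp only [toggleFall, if_pos hM]
    exact .inl ⟨_, _, _, isFallTransfer_moveFallRight hp hq hpq' hM⟩
  · have hf : HasFall q := by
      by_contra hf
      exact hM ⟨hfall.resolve_right hf, fun h => absurd h hf⟩
    simp only [toggleFall, if_neg hM]
    exact .inr ⟨_, _, _, isFallTransfer_moveFallLeft hp hq hpq' hM hf⟩

open Classical in
noncomputable def lPairs (i j : Fin (n + 1)) :
    Finset ((Fin (n + 1) → Fin (n + 1)) × (Fin (n + 1) → Fin (n + 1))) :=
  univ.filter fun x => IsLPair i j x.1 x.2

lemma mem_lPairs {i j : Fin (n + 1)}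
    {x : (Fin (n + 1) → Fin (n + 1)) × (Fin (n + 1) → Fin (n + 1))} :
    x ∈ lPairs i j ↔ IsLPair i j x.1 x.2 := by
  simp [lPairs]

variable {R : Type*} [CommRing R]

lemma Lmat_mul_LinvMat_apply (t : ℕ → ℕ → R) (i j : Fin (n + 1)) :
    (Lmat n t * LinvMat n t) i j =
      ∑ x ∈ lPairs i j, lweight n t x.1 * linvweight n t x.2 := by
  classical
  rw [Matrix.mul_apply, ← sum_fiberwise (lPairs i j) fun x => x.1 (Fin.last n)]
  refine sum_congr rfl fun m _ => ?_
  rw [Lmat, LinvMat, Matrix.of_apply, Matrix.of_apply, sum_mul_sum, ← sum_product']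
  refine sum_congr (ext fun x => ?_) fun _ _ => rfl
  simp only [mem_product, mem_filter, mem_univ, true_and, mem_lPairs, IsLPair]
  exact ⟨fun ⟨⟨hp, hp0, hpm⟩, hq, hq0, hqn⟩ =>
      ⟨⟨hp, hq, hp0, hpm.trans hq0.symm, hqn⟩, hpm⟩,
    fun ⟨⟨hp, hq, hp0, hpq, hqn⟩, hpm⟩ =>
      ⟨⟨hp, hp0, hpm⟩, hq, hpq.symm.trans hpm, hqn⟩⟩

lemma lPairs_self (i : Fin (n + 1)) : lPairs i i = {(fun _ => i, fun _ => i)} := by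
  ext ⟨p, q⟩
  rw [mem_lPairs, isLPair_self_iff, mem_singleton, Prod.mk.injEq]

lemma sum_lPairs_eq_zero (t : ℕ → ℕ → R) {i j : Fin (n + 1)} (hij : i ≠ j) :
    ∑ x ∈ lPairs i j, lweight n t x.1 * linvweight n t x.2 = 0 := by
  have key : ∀ x ∈ lPairs i j,
      IsLPair i j (toggleFall x).1 (toggleFall x).2 ∧
      lweight n t x.1 * linvweight n t x.2 +
        lweight n t (toggleFall x).1 * linvweight n t (toggleFall x).2 = 0 ∧
      toggleFall (toggleFall x) = x ∧ toggleFall x ≠ x := by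
    rintro ⟨p, q⟩ hx
    rw [mem_lPairs] at hx
    rcases exists_isFallTransfer_toggleFall hij hx with ⟨a, b, ℓ, h⟩ | ⟨a, b, ℓ, h⟩
    · exact ⟨(h.isLPair_iff i j).1 hx, h.weight_add_eq_zero t,
        by simpa using h.toggleFall_eq.2, fun he => h.fst_ne (congrArg Prod.fst he).symm⟩
    · exact ⟨(h.isLPair_iff i j).2 hx, (add_comm _ _).trans (h.weight_add_eq_zero t),
        by simpa using h.toggleFall_eq.1, fun he => h.fst_ne (congrArg Prod.fst he)⟩
  exact sum_involution (fun x _ => toggleFall x) (fun x hx => (key x hx).2.1)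
    (fun x hx _ => (key x hx).2.2.2) (fun x hx => mem_lPairs.2 (key x hx).1)
    (fun x hx => (key x hx).2.2.1)

end LPath

theorem stmt15 {R : Type*} [CommRing R] (n : ℕ) (t : ℕ → ℕ → R) :
    Lmat n t * LinvMat n t = 1 := by
  ext i j
  rw [LPath.Lmat_mul_LinvMat_apply, Matrix.one_apply]
  split_ifs with hij
  · subst hij
    rw [LPath.lPairs_self, Finset.sum_singleton]
    simp [lweight, linvweight]
  · exact LPath.sum_lPairs_eq_zero t hij
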